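/- arXiv:0801.0390 — 4 statements merged into one kernel-verified Lean document; each statement's English description precedes it below -/
import Mathlib

section
/- Let φ : ℝ^d → ℝ be strictly convex and differentiable with ∇φ a bijection from ℝ^d onto its image, let x_1,…,x_m ∈ ℝ^d and γ_1,…,γ_m > 0 with Γ = Σ_i γ_i, and suppose μ = (∇φ)^{-1}((1/Γ) Σ_i γ_i ∇φ(x_i)) is well defined. Then μ is the unique minimizer over y ∈ ℝ^d of the weighted total dual distortion y ↦ Σ_i γ_i D_φ(y‖x_i). -/
/-!
By the three-point identity of Bregman divergences,
`D(y‖xᵢ) = D(μ‖xᵢ) + D(y‖μ) + ⟪y - μ, ∇φ μ - ∇φ xᵢ⟫`. Weighting by `γᵢ` and summing, the cross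
terms cancel exactly because `Γ ∇φ μ = Σ γᵢ ∇φ xᵢ`, so the total distortion at `y` exceeds the one
at `μ` by `Γ D(y‖μ)`, which is positive for `y ≠ μ` since a strictly convex function lies strictly
above its tangent hyperplanes.
-/

open scoped RealInnerProductSpace BigOperators

/-- The Bregman divergence `D_φ(x‖y) = φ(x) − φ(y) − ⟨x − y, ∇φ(y)⟩`. -/
noncomputable def bregman {d : ℕ} (φ : EuclideanSpace ℝ (Fin d) → ℝ)
    (x y : EuclideanSpace ℝ (Fin d)) : ℝ :=
  φ x - φ y - ⟪x - y, gradient φ y⟫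

open AffineMap Set

lemma StrictConvexOn.comp_lineMap {E : Type*} [AddCommGroup E] [Module ℝ E] {f : E → ℝ}
    (hf : StrictConvexOn ℝ univ f) {a b : E} (hab : a ≠ b) :
    StrictConvexOn ℝ univ (f ∘ (lineMap a b : ℝ → E)) := by
  refine ⟨convex_univ, fun p _ q _ hpq s t hs ht hst => ?_⟩
  simp only [Function.comp_apply, Convex.combo_affine_apply hst]
  exact hf.2 trivial trivial ((lineMap_injective ℝ hab).ne hpq) hs ht hst

lemma StrictConvexOn.lt_sub_of_hasFDerivAt {E : Type*} [NormedAddCommGroup E] [NormedSpace ℝ E]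
    {f : E → ℝ} {f' : E →L[ℝ] ℝ} {x y : E} (hf : StrictConvexOn ℝ univ f)
    (hf' : HasFDerivAt f f' x) (hxy : x ≠ y) :
    f' (y - x) < f y - f x := by
  have hline : HasDerivAt (f ∘ (lineMap x y : ℝ → E)) (f' (y - x)) 0 := by
    refine HasFDerivAt.comp_hasDerivAt (0 : ℝ) ?_ hasDerivAt_lineMap
    simpa using hf'
  simpa [slope] using
    (hf.comp_lineMap hxy).lt_slope_of_hasDerivAt trivial trivial zero_lt_one hline

section Bregman

variable {d : ℕ} {φ : EuclideanSpace ℝ (Fin d) → ℝ}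

lemma bregman_pos (hconv : StrictConvexOn ℝ univ φ) (hdiff : Differentiable ℝ φ)
    {y μ : EuclideanSpace ℝ (Fin d)} (hne : y ≠ μ) : 0 < bregman φ y μ := by
  have htangent := hconv.lt_sub_of_hasFDerivAt (hdiff μ).hasGradientAt.hasFDerivAt hne.symm
  rw [InnerProductSpace.toDual_apply_apply, real_inner_comm] at htangent
  unfold bregman
  linarith

lemma bregman_three_point (x y z : EuclideanSpace ℝ (Fin d)) :
    bregman φ x z = bregman φ y z + bregman φ x y + ⟪x - y, gradient φ y - gradient φ z⟫ := by
  simp only [bregman, inner_sub_left, inner_sub_right]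
  ring

lemma sum_mul_bregman_eq {ι : Type*} (s : Finset ι) (γ : ι → ℝ)
    (z : ι → EuclideanSpace ℝ (Fin d)) {μ : EuclideanSpace ℝ (Fin d)}
    (hμ : (∑ i ∈ s, γ i) • gradient φ μ = ∑ i ∈ s, γ i • gradient φ (z i))
    (y : EuclideanSpace ℝ (Fin d)) :
    ∑ i ∈ s, γ i * bregman φ y (z i) =
      ∑ i ∈ s, γ i * bregman φ μ (z i) + (∑ i ∈ s, γ i) * bregman φ y μ := by
  have hcross : ∑ i ∈ s, γ i * ⟪y - μ, gradient φ μ - gradient φ (z i)⟫ = 0 := by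
    simp_rw [← real_inner_smul_right, ← inner_sum, smul_sub]
    rw [Finset.sum_sub_distrib, ← Finset.sum_smul, hμ, sub_self, inner_zero_right]
  simp only [fun i => bregman_three_point (φ := φ) y μ (z i), mul_add, Finset.sum_add_distrib,
    hcross, Finset.sum_mul]
  ring

end Bregman

theorem statement_3_general (d m : ℕ) (hm : 1 ≤ m)
    (φ : EuclideanSpace ℝ (Fin d) → ℝ)
    (hconv : StrictConvexOn ℝ Set.univ φ) (hdiff : Differentiable ℝ φ)
    (x : Fin m → EuclideanSpace ℝ (Fin d))
    (γ : Fin m → ℝ) (hγ : ∀ i, 0 < γ i)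
    (Γ : ℝ) (hΓ : Γ = ∑ i, γ i)
    (μ : EuclideanSpace ℝ (Fin d))
    (hμ : gradient φ μ = (1 / Γ) • ∑ i, γ i • gradient φ (x i)) :
    ∀ y : EuclideanSpace ℝ (Fin d), y ≠ μ →
      (∑ i, γ i * bregman φ μ (x i)) < ∑ i, γ i * bregman φ y (x i) := by
  intro y hy
  have : Nonempty (Fin m) := ⟨⟨0, hm⟩⟩
  have hΓpos : 0 < Γ := hΓ ▸ Finset.sum_pos (fun i _ => hγ i) Finset.univ_nonempty
  have hcentroid : (∑ i, γ i) • gradient φ μ = ∑ i, γ i • gradient φ (x i) := by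
    rw [← hΓ, hμ, smul_smul, mul_one_div_cancel hΓpos.ne', one_smul]
  rw [sum_mul_bregman_eq Finset.univ γ x hcentroid y, ← hΓ]
  have hgap := mul_pos hΓpos (bregman_pos hconv hdiff hy)
  linarith

/-- the low-distortion aggregator `μ = (∇φ)⁻¹((1/Γ) Σ γᵢ ∇φ(xᵢ))` is the unique
minimizer of the weighted total dual distortion `y ↦ Σ γᵢ D_φ(y‖xᵢ)`. -/
theorem statement_3 (d m : ℕ) (hm : 1 ≤ m)
    (φ : EuclideanSpace ℝ (Fin d) → ℝ)
    (hconv : StrictConvexOn ℝ Set.univ φ) (hdiff : Differentiable ℝ φ)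
    (hinj : Function.Injective (gradient φ))
    (x : Fin m → EuclideanSpace ℝ (Fin d))
    (γ : Fin m → ℝ) (hγ : ∀ i, 0 < γ i)
    (Γ : ℝ) (hΓ : Γ = ∑ i, γ i)
    (μ : EuclideanSpace ℝ (Fin d))
    (hμ : gradient φ μ = (1 / Γ) • ∑ i, γ i • gradient φ (x i)) :
    ∀ y : EuclideanSpace ℝ (Fin d), y ≠ μ →
      (∑ i, γ i * bregman φ μ (x i)) < ∑ i, γ i * bregman φ y (x i) :=
  statement_3_general d m hm φ hconv hdiff x γ hγ Γ hΓ μ hμ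
end

section
/- Let m ≥ 2 and let x_⋆ be the LDA on (0,∞)^m with generator φ and weights γ_1,…,γ_m > 0, Γ = Σ_i γ_i. If x_⋆ is concave on (0,∞)^m, then φ' is concave on (0,∞) and (φ')^{-1} is convex on its domain. If x_⋆ is convex on (0,∞)^m, then φ' is convex on (0,∞) and (φ')^{-1} is concave on its domain. -/
/-!
Normalising by `Γ`, `M = x⋆ / Γ` is the quasi-arithmetic mean of the increasing function `φ'` with
weights `wᵢ = γᵢ / Γ`, and `M (1, …, 1) = 1`. Differentiating `φ' ∘ M` along segments from
`(1, …, 1)` shows that the tangent plane of `M` there is the arithmetic mean `∑ wᵢ xᵢ`, so a concave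
`M` lies below it. At `x = (u, v, …, v)` this reads `M x ≤ w₁ u + (1 - w₁) v`, and applying `φ'`
gives Jensen's inequality for `φ'` with the single weight `w₁ ∈ (0, 1)`, which already forces a
continuous function to be concave. The inverse of an increasing concave function is convex. The
convex case is the mirror image.
-/

open Set Filter Topology

theorem HasDerivAt.le_of_eventually_le_nhdsGT {F G : ℝ → ℝ} {F' G' a : ℝ}
    (hF : HasDerivAt F F' a) (hG : HasDerivAt G G' a) (ha : F a = G a)
    (hle : ∀ᶠ x in 𝓝[>] a, F x ≤ G x) : F' ≤ G' := by
  have hslope : Tendsto (slope (G - F) a) (𝓝[>] a) (𝓝 (G' - F')) :=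
    (hasDerivAt_iff_tendsto_slope.mp (hG.sub hF)).mono_left (nhdsGT_le_nhdsNE a)
  have hnonneg : ∀ᶠ x in 𝓝[>] a, 0 ≤ slope (G - F) a x := by
    filter_upwards [hle, self_mem_nhdsWithin] with x hx hax
    rw [slope_def_field, Pi.sub_apply, Pi.sub_apply, ha, sub_self, sub_zero]
    exact div_nonneg (sub_nonneg.mpr hx) (sub_nonneg.mpr (le_of_lt hax))
  linarith [ge_of_tendsto hslope hnonneg]

def JensenConcaveOn (α : ℝ) (s : Set ℝ) (h : ℝ → ℝ) : Prop :=
  ∀ u ∈ s, ∀ v ∈ s, α * h u + (1 - α) * h v ≤ h (α * u + (1 - α) * v)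

namespace JensenConcaveOn

variable {α : ℝ} {h : ℝ → ℝ}

/-- If `h` dipped below zero, its leftmost minimum point `t₀` would lie strictly inside `(a, b)`,
and `t₀ = α * u + (1 - α) * v` with `u < t₀ < v` would give `h t₀ > α * h u + (1 - α) * h v`. -/
theorem nonneg_on_Icc {a b : ℝ} (hα0 : 0 < α) (hα1 : α < 1) (hJ : JensenConcaveOn α (Icc a b) h)
    (hcont : ContinuousOn h (Icc a b)) (ha : 0 ≤ h a) (hb : 0 ≤ h b) :
    ∀ t ∈ Icc a b, 0 ≤ h t := by
  by_contra! hneg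
  obtain ⟨t, ht, hht⟩ := hneg
  obtain ⟨t₁, ht₁, hmin⟩ := isCompact_Icc.exists_isMinOn ⟨t, ht⟩ hcont
  rw [isMinOn_iff] at hmin
  have hclosed : IsClosed (Icc a b ∩ h ⁻¹' {h t₁}) :=
    hcont.preimage_isClosed_of_isClosed isClosed_Icc isClosed_singleton
  obtain ⟨t₀, ⟨ht₀, hht₀⟩, hleast⟩ :=
    (isCompact_Icc.of_isClosed_subset hclosed inter_subset_left).exists_isLeast ⟨t₁, ht₁, rfl⟩
  replace hht₀ : h t₀ = h t₁ := hht₀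
  have hμ : h t₁ < 0 := (hmin t ht).trans_lt hht
  have hat₀ : a < t₀ := ht₀.1.lt_of_ne fun hat => by rw [← hat] at hht₀; linarith
  have ht₀b : t₀ < b := ht₀.2.lt_of_ne fun hbt => by rw [hbt] at hht₀; linarith
  set δ := min (t₀ - a) (b - t₀)
  have hδ : 0 < δ := lt_min (by linarith) (by linarith)
  have hδa : δ ≤ t₀ - a := min_le_left _ _
  have hδb : δ ≤ b - t₀ := min_le_right _ _
  have hu : t₀ - (1 - α) * δ ∈ Icc a b := ⟨by nlinarith, by nlinarith⟩
  have hv : t₀ + α * δ ∈ Icc a b := ⟨by nlinarith, by nlinarith⟩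
  have hhu : h t₁ < h (t₀ - (1 - α) * δ) := by
    refine (hmin _ hu).lt_of_ne fun heq => ?_
    have := hleast ⟨hu, heq.symm⟩
    nlinarith
  have hJu := hJ _ hu _ hv
  rw [show α * (t₀ - (1 - α) * δ) + (1 - α) * (t₀ + α * δ) = t₀ by ring, hht₀] at hJu
  nlinarith [hmin _ hv]

theorem concaveOn {s : Set ℝ} (hs : Convex ℝ s) (hα0 : 0 < α) (hα1 : α < 1)
    (hJ : JensenConcaveOn α s h) (hcont : ContinuousOn h s) : ConcaveOn ℝ s h := by
  refine LinearOrder.concaveOn_of_lt hs fun x hx y hy hxy a b ha hb hab => ?_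
  obtain rfl : a = 1 - b := by linarith
  have hIcc : Icc x y ⊆ s := hs.ordConnected.out hx hy
  set chord := fun t => h x + (t - x) * slope h x y
  have hchord : (y - x) * slope h x y = h y - h x := sub_smul_slope h x y
  have hk := nonneg_on_Icc (h := fun t => h t - chord t) hα0 hα1
    (fun u hu v hv => by have := hJ u (hIcc hu) v (hIcc hv); simp only [chord]; linarith)
    ((hcont.mono hIcc).sub (by fun_prop))
    (by simp [chord]) (by simp [chord, hchord]) ((1 - b) * x + b * y)
    ⟨by nlinarith [mul_pos hb (sub_pos.2 hxy)], by nlinarith [mul_pos ha (sub_pos.2 hxy)]⟩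
  simp only [chord, smul_eq_mul] at hk ⊢
  nlinarith

end JensenConcaveOn

theorem Fintype.sum_mul_update_const {ι : Type*} [Fintype ι] [DecidableEq ι] (w : ι → ℝ)
    (h : ℝ → ℝ) (i₀ : ι) (u v : ℝ) :
    ∑ i, w i * h (Function.update (fun _ => v) i₀ u i) = w i₀ * h u + (∑ i, w i - w i₀) * h v := by
  rw [Fintype.sum_eq_add_sum_compl i₀, Fintype.sum_eq_add_sum_compl i₀ w, Function.update_self,
    add_sub_cancel_left, Finset.sum_mul]
  congr 1
  refine Finset.sum_congr rfl fun i hi => ?_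
  rw [Function.update_of_ne (by simpa using hi)]

theorem HasDerivAt.comp_one_add_mul {g : ℝ → ℝ} {g' : ℝ} (hg : HasDerivAt g g' 1) (c : ℝ) :
    HasDerivAt (fun ε => g (1 + ε * c)) (g' * c) 0 := by
  have hline : HasDerivAt (fun ε : ℝ => 1 + ε * c) c 0 := by
    simpa using ((hasDerivAt_id (0 : ℝ)).mul_const c).const_add 1
  exact (by simpa using hg : HasDerivAt g g' (1 + 0 * c)).comp 0 hline

theorem one_sub_smul_one_add_smul {ι : Type*} (x : ι → ℝ) (ε : ℝ) :
    (1 - ε) • (1 : ι → ℝ) + ε • x = fun i => 1 + ε * (x i - 1) := by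
  ext i
  simp only [Pi.add_apply, Pi.smul_apply, Pi.one_apply, smul_eq_mul]
  ring

variable {ι : Type*} [Fintype ι]

def IsQuasiArithmeticMean (g : ℝ → ℝ) (w : ι → ℝ) (M : (ι → ℝ) → ℝ) : Prop :=
  ∀ x : ι → ℝ, (∀ i, 0 < x i) → 0 < M x ∧ g (M x) = ∑ i, w i * g (x i)

namespace IsQuasiArithmeticMean

variable {g : ℝ → ℝ} {w : ι → ℝ} {M : (ι → ℝ) → ℝ}

theorem map_one (hM : IsQuasiArithmeticMean g w M) (hw : ∑ i, w i = 1)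
    (hg : InjOn g (Ioi 0)) : M 1 = 1 := by
  obtain ⟨hpos, hM1⟩ := hM 1 fun _ => one_pos
  simp only [Pi.one_apply, ← Finset.sum_mul, hw, one_mul] at hM1
  exact hg hpos (mem_Ioi.mpr one_pos) hM1

theorem hasDerivAt_weightedSum_segment (hw : ∑ i, w i = 1) {g' : ℝ} (hg : HasDerivAt g g' 1)
    (x : ι → ℝ) :
    HasDerivAt (fun ε => ∑ i, w i * g (1 + ε * (x i - 1))) (g' * (∑ i, w i * x i - 1)) 0 := by
  have hsum : ∑ i, w i * (g' * (x i - 1)) = g' * (∑ i, w i * x i - ∑ i, w i) := by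
    rw [mul_sub, Finset.mul_sum, Finset.mul_sum, ← Finset.sum_sub_distrib]
    exact Finset.sum_congr rfl fun i _ => by ring
  rw [hw] at hsum
  rw [← hsum]
  exact HasDerivAt.fun_sum fun i _ => (hg.comp_one_add_mul (x i - 1)).const_mul (w i)

theorem le_weightedSum_of_concaveOn (hM : IsQuasiArithmeticMean g w M) (hw : ∑ i, w i = 1)
    (hg : StrictMonoOn g (Ioi 0)) {g' : ℝ} (hg1 : HasDerivAt g g' 1) (hg' : 0 < g')
    (hconc : ConcaveOn ℝ {x : ι → ℝ | ∀ i, 0 < x i} M) {x : ι → ℝ} (hx : ∀ i, 0 < x i) :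
    M x ≤ ∑ i, w i * x i := by
  have hle : ∀ᶠ ε in 𝓝[>] 0, g (1 + ε * (M x - 1)) ≤ ∑ i, w i * g (1 + ε * (x i - 1)) := by
    filter_upwards [Ioo_mem_nhdsGT one_pos] with ε ⟨hε0, hε1⟩
    have h1 : (1 : ι → ℝ) ∈ {x : ι → ℝ | ∀ i, 0 < x i} := fun _ => one_pos
    have hmem := hconc.1 h1 hx (sub_nonneg.2 hε1.le) hε0.le (sub_add_cancel 1 ε)
    have hcomb := hconc.2 h1 hx (sub_nonneg.2 hε1.le) hε0.le (sub_add_cancel 1 ε)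
    rw [one_sub_smul_one_add_smul] at hmem hcomb
    rw [hM.map_one hw hg.injOn, smul_eq_mul, smul_eq_mul] at hcomb
    obtain ⟨hpos, heq⟩ := hM _ hmem
    rw [← heq]
    refine hg.monotoneOn ?_ hpos (by linarith)
    have := (hM x hx).1
    show 0 < 1 + ε * (M x - 1)
    nlinarith
  have := (hg1.comp_one_add_mul (M x - 1)).le_of_eventually_le_nhdsGT
    (hasDerivAt_weightedSum_segment hw hg1 x) (by simp [← Finset.sum_mul, hw]) hle
  nlinarith

theorem weightedSum_le_of_convexOn (hM : IsQuasiArithmeticMean g w M) (hw : ∑ i, w i = 1)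
    (hg : StrictMonoOn g (Ioi 0)) {g' : ℝ} (hg1 : HasDerivAt g g' 1) (hg' : 0 < g')
    (hconv : ConvexOn ℝ {x : ι → ℝ | ∀ i, 0 < x i} M) {x : ι → ℝ} (hx : ∀ i, 0 < x i) :
    ∑ i, w i * x i ≤ M x := by
  have hle : ∀ᶠ ε in 𝓝[>] 0, ∑ i, w i * g (1 + ε * (x i - 1)) ≤ g (1 + ε * (M x - 1)) := by
    filter_upwards [Ioo_mem_nhdsGT one_pos] with ε ⟨hε0, hε1⟩
    have h1 : (1 : ι → ℝ) ∈ {x : ι → ℝ | ∀ i, 0 < x i} := fun _ => one_pos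
    have hmem := hconv.1 h1 hx (sub_nonneg.2 hε1.le) hε0.le (sub_add_cancel 1 ε)
    have hcomb := hconv.2 h1 hx (sub_nonneg.2 hε1.le) hε0.le (sub_add_cancel 1 ε)
    rw [one_sub_smul_one_add_smul] at hmem hcomb
    rw [hM.map_one hw hg.injOn, smul_eq_mul, smul_eq_mul] at hcomb
    obtain ⟨hpos, heq⟩ := hM _ hmem
    rw [← heq]
    refine hg.monotoneOn hpos ?_ (by linarith)
    have := (hM x hx).1
    show 0 < 1 + ε * (M x - 1)
    nlinarith
  have := (hasDerivAt_weightedSum_segment hw hg1 x).le_of_eventually_le_nhdsGT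
    (hg1.comp_one_add_mul (M x - 1)) (by simp [← Finset.sum_mul, hw]) hle
  nlinarith

theorem jensenConcaveOn_of_concaveOn [DecidableEq ι] (hM : IsQuasiArithmeticMean g w M)
    (hw : ∑ i, w i = 1) (hg : StrictMonoOn g (Ioi 0)) {g' : ℝ} (hg1 : HasDerivAt g g' 1)
    (hg' : 0 < g') (hconc : ConcaveOn ℝ {x : ι → ℝ | ∀ i, 0 < x i} M) (i₀ : ι) :
    JensenConcaveOn (w i₀) (Ioi 0) g := by
  intro u hu v hv
  have hx : ∀ i, 0 < Function.update (fun _ => v) i₀ u i :=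
    Function.forall_update_iff _ (p := fun _ y => 0 < y) |>.2 ⟨hu, fun _ _ => hv⟩
  obtain ⟨hpos, heq⟩ := hM _ hx
  have hle := hM.le_weightedSum_of_concaveOn hw hg hg1 hg' hconc hx
  rw [Fintype.sum_mul_update_const, hw] at heq
  rw [show ∑ i, w i * Function.update (fun _ => v) i₀ u i = w i₀ * u + (1 - w i₀) * v by
    simpa [hw] using Fintype.sum_mul_update_const w id i₀ u v] at hle
  rw [← heq]
  exact hg.monotoneOn hpos (hpos.trans_le hle) hle

theorem jensenConcaveOn_neg_of_convexOn [DecidableEq ι] (hM : IsQuasiArithmeticMean g w M)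
    (hw : ∑ i, w i = 1) (hg : StrictMonoOn g (Ioi 0)) {g' : ℝ} (hg1 : HasDerivAt g g' 1)
    (hg' : 0 < g') (hconv : ConvexOn ℝ {x : ι → ℝ | ∀ i, 0 < x i} M) {i₀ : ι} (hw0 : 0 ≤ w i₀)
    (hw1 : w i₀ ≤ 1) : JensenConcaveOn (w i₀) (Ioi 0) (-g) := by
  intro u hu v hv
  have hx : ∀ i, 0 < Function.update (fun _ => v) i₀ u i :=
    Function.forall_update_iff _ (p := fun _ y => 0 < y) |>.2 ⟨hu, fun _ _ => hv⟩
  obtain ⟨hpos, heq⟩ := hM _ hx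
  have hge := hM.weightedSum_le_of_convexOn hw hg hg1 hg' hconv hx
  rw [Fintype.sum_mul_update_const, hw] at heq
  rw [show ∑ i, w i * Function.update (fun _ => v) i₀ u i = w i₀ * u + (1 - w i₀) * v by
    simpa [hw] using Fintype.sum_mul_update_const w id i₀ u v] at hge
  have hcomb : w i₀ * u + (1 - w i₀) * v ∈ Ioi 0 :=
    convex_Ioi 0 hu hv hw0 (sub_nonneg.2 hw1) (add_sub_cancel _ _)
  simp only [Pi.neg_apply]
  linarith [hg.monotoneOn hcomb hpos hge]

theorem concaveOn_of_concaveOn [Nontrivial ι] (hM : IsQuasiArithmeticMean g w M)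
    (hw0 : ∀ i, 0 < w i) (hw : ∑ i, w i = 1) (hcont : ContinuousOn g (Ioi 0))
    (hg : StrictMonoOn g (Ioi 0)) {g' : ℝ} (hg1 : HasDerivAt g g' 1) (hg' : 0 < g')
    (hconc : ConcaveOn ℝ {x : ι → ℝ | ∀ i, 0 < x i} M) : ConcaveOn ℝ (Ioi 0) g := by
  classical
  obtain ⟨i₀, j, hj⟩ := exists_pair_ne ι
  have hlt : w i₀ < 1 := hw ▸ Finset.single_lt_sum hj.symm (Finset.mem_univ _)
    (Finset.mem_univ _) (hw0 j) fun k _ _ => (hw0 k).le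
  exact (hM.jensenConcaveOn_of_concaveOn hw hg hg1 hg' hconc i₀).concaveOn (convex_Ioi 0)
    (hw0 i₀) hlt hcont

theorem convexOn_of_convexOn [Nontrivial ι] (hM : IsQuasiArithmeticMean g w M)
    (hw0 : ∀ i, 0 < w i) (hw : ∑ i, w i = 1) (hcont : ContinuousOn g (Ioi 0))
    (hg : StrictMonoOn g (Ioi 0)) {g' : ℝ} (hg1 : HasDerivAt g g' 1) (hg' : 0 < g')
    (hconv : ConvexOn ℝ {x : ι → ℝ | ∀ i, 0 < x i} M) : ConvexOn ℝ (Ioi 0) g := by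
  classical
  obtain ⟨i₀, j, hj⟩ := exists_pair_ne ι
  have hlt : w i₀ < 1 := hw ▸ Finset.single_lt_sum hj.symm (Finset.mem_univ _)
    (Finset.mem_univ _) (hw0 j) fun k _ _ => (hw0 k).le
  exact neg_concaveOn_iff.mp <|
    (hM.jensenConcaveOn_neg_of_convexOn hw hg hg1 hg' hconv (hw0 i₀).le hlt.le).concaveOn
      (convex_Ioi 0) (hw0 i₀) hlt hcont.neg

end IsQuasiArithmeticMean

theorem ConcaveOn.convexOn_image_of_leftInvOn {s : Set ℝ} {g ψ : ℝ → ℝ} (hg : ConcaveOn ℝ s g)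
    (hmono : StrictMonoOn g s) (hs : Convex ℝ (g '' s)) (hψ : LeftInvOn ψ g s) :
    ConvexOn ℝ (g '' s) ψ := by
  refine ⟨hs, ?_⟩
  rintro _ ⟨a, ha, rfl⟩ _ ⟨b, hb, rfl⟩ μ ν hμ hν hμν
  obtain ⟨c, hc, hgc⟩ := hs (mem_image_of_mem g ha) (mem_image_of_mem g hb) hμ hν hμν
  have hle := hg.2 ha hb hμ hν hμν
  rw [← hgc] at hle ⊢
  rw [hψ hc, hψ ha, hψ hb]
  exact (hmono.le_iff_le hc (hg.1 ha hb hμ hν hμν)).mp hle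

theorem ConvexOn.concaveOn_image_of_leftInvOn {s : Set ℝ} {g ψ : ℝ → ℝ} (hg : ConvexOn ℝ s g)
    (hmono : StrictMonoOn g s) (hs : Convex ℝ (g '' s)) (hψ : LeftInvOn ψ g s) :
    ConcaveOn ℝ (g '' s) ψ := by
  refine ⟨hs, ?_⟩
  rintro _ ⟨a, ha, rfl⟩ _ ⟨b, hb, rfl⟩ μ ν hμ hν hμν
  obtain ⟨c, hc, hgc⟩ := hs (mem_image_of_mem g ha) (mem_image_of_mem g hb) hμ hν hμν
  have hle := hg.2 ha hb hμ hν hμν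
  rw [← hgc] at hle ⊢
  rw [hψ hc, hψ ha, hψ hb]
  exact (hmono.le_iff_le (hg.1 ha hb hμ hν hμν) hc).mp hle

theorem statement_6_general (m : ℕ) (hm : 2 ≤ m) (Dφ DDφ ψ : ℝ → ℝ)
    (hd2 : ∀ t ∈ Set.Ioi (0:ℝ), HasDerivAt Dφ (DDφ t) t)
    (hpos : ∀ t ∈ Set.Ioi (0:ℝ), 0 < DDφ t)
    (hψ : ∀ t ∈ Set.Ioi (0:ℝ), ψ (Dφ t) = t)
    (γ : Fin m → ℝ) (hγ : ∀ i, 0 < γ i)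
    (Γ : ℝ) (hΓ : Γ = ∑ i, γ i)
    (f : (Fin m → ℝ) → ℝ)
    (hf : ∀ x : Fin m → ℝ, (∀ i, 0 < x i) →
      0 < f x / Γ ∧ Dφ (f x / Γ) = (1 / Γ) * ∑ i, γ i * Dφ (x i)) :
    (ConcaveOn ℝ {x : Fin m → ℝ | ∀ i, 0 < x i} f →
      ConcaveOn ℝ (Set.Ioi 0) Dφ ∧ ConvexOn ℝ (Dφ '' Set.Ioi 0) ψ)
    ∧ (ConvexOn ℝ {x : Fin m → ℝ | ∀ i, 0 < x i} f →
      ConvexOn ℝ (Set.Ioi 0) Dφ ∧ ConcaveOn ℝ (Dφ '' Set.Ioi 0) ψ) := by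
  have : Nontrivial (Fin m) := Fin.nontrivial_iff_two_le.mpr hm
  have hΓpos : 0 < Γ := hΓ ▸ Finset.sum_pos (fun i _ => hγ i) Finset.univ_nonempty
  have hcont : ContinuousOn Dφ (Ioi 0) := fun t ht => (hd2 t ht).continuousAt.continuousWithinAt
  have hmono : StrictMonoOn Dφ (Ioi 0) := by
    refine strictMonoOn_of_hasDerivWithinAt_pos (f' := DDφ) (convex_Ioi 0) hcont (fun t ht => ?_)
      (fun t ht => ?_) <;> rw [interior_Ioi] at ht
    exacts [(hd2 t ht).hasDerivWithinAt, hpos t ht]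
  have hJ : Convex ℝ (Dφ '' Ioi 0) :=
    Real.convex_iff_isPreconnected.2 (isPreconnected_Ioi.image _ hcont)
  have hM : IsQuasiArithmeticMean Dφ (fun i => γ i / Γ) (fun x => f x / Γ) := fun x hx => by
    refine ⟨(hf x hx).1, ?_⟩
    rw [(hf x hx).2, Finset.mul_sum]
    exact Finset.sum_congr rfl fun i _ => by ring
  have hw0 : ∀ i, 0 < γ i / Γ := fun i => div_pos (hγ i) hΓpos
  have hw : ∑ i, γ i / Γ = 1 := by rw [← Finset.sum_div, ← hΓ, div_self hΓpos.ne']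
  have h1 : (1 : ℝ) ∈ Ioi 0 := mem_Ioi.2 one_pos
  refine ⟨fun hconc => ?_, fun hconv => ?_⟩
  · have hD := hM.concaveOn_of_concaveOn hw0 hw hcont hmono (hd2 1 h1) (hpos 1 h1)
      (by simpa [div_eq_inv_mul] using hconc.smul (inv_nonneg.2 hΓpos.le))
    exact ⟨hD, hD.convexOn_image_of_leftInvOn hmono hJ hψ⟩
  · have hD := hM.convexOn_of_convexOn hw0 hw hcont hmono (hd2 1 h1) (hpos 1 h1)
      (by simpa [div_eq_inv_mul] using hconv.smul (inv_nonneg.2 hΓpos.le))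
    exact ⟨hD, hD.concaveOn_image_of_leftInvOn hmono hJ hψ⟩

/-- if the LDA `x⋆` (with generator `φ`) is concave on `(0,∞)^m` then `φ'` is
concave on `(0,∞)` and `(φ')⁻¹` is convex on its domain `φ' '' (0,∞)`; if `x⋆` is convex,
the regimes are reversed. The LDA is encoded by its defining property. -/
theorem statement_6 (m : ℕ) (hm : 2 ≤ m) (φ Dφ DDφ ψ : ℝ → ℝ)
    (hconv : StrictConvexOn ℝ (Set.Ioi 0) φ)
    (hd1 : ∀ t ∈ Set.Ioi (0:ℝ), HasDerivAt φ (Dφ t) t)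
    (hd2 : ∀ t ∈ Set.Ioi (0:ℝ), HasDerivAt Dφ (DDφ t) t)
    (hc2 : ContinuousOn DDφ (Set.Ioi 0))
    (hpos : ∀ t ∈ Set.Ioi (0:ℝ), 0 < DDφ t)
    (hψ : ∀ t ∈ Set.Ioi (0:ℝ), ψ (Dφ t) = t)
    (γ : Fin m → ℝ) (hγ : ∀ i, 0 < γ i)
    (Γ : ℝ) (hΓ : Γ = ∑ i, γ i)
    (f : (Fin m → ℝ) → ℝ)
    (hf : ∀ x : Fin m → ℝ, (∀ i, 0 < x i) →
      0 < f x / Γ ∧ Dφ (f x / Γ) = (1 / Γ) * ∑ i, γ i * Dφ (x i)) :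
    (ConcaveOn ℝ {x : Fin m → ℝ | ∀ i, 0 < x i} f →
      ConcaveOn ℝ (Set.Ioi 0) Dφ ∧ ConvexOn ℝ (Dφ '' Set.Ioi 0) ψ)
    ∧ (ConvexOn ℝ {x : Fin m → ℝ | ∀ i, 0 < x i} f →
      ConvexOn ℝ (Set.Ioi 0) Dφ ∧ ConcaveOn ℝ (Dφ '' Set.Ioi 0) ψ) :=
  statement_6_general m hm Dφ DDφ ψ hd2 hpos hψ γ hγ Γ hΓ f hf
end

section
/- Let m ≥ 2 and let x_⋆ be the LDA on (0,∞)^m with generator φ and weights γ_1,…,γ_m > 0, where x_⋆ takes only positive values. Then the elasticities of x_⋆ sum to one, i.e. Σ_{i=1}^m (x_i/x_⋆(x))·(∂x_⋆/∂x_i)(x) = 1 for all x ∈ (0,∞)^m, if and only if there exist c > 0 and κ ∈ ℝ such that φ''(t) = c·t^κ for all t > 0 (so that x_⋆ is a CES aggregator when κ ≠ −1, and the Cobb–Douglas limit of CES when κ = −1). -/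
/-!
Write `ψ = φ'` and `h t = t ψ'(t)`. Differentiating `ψ(x⋆/Γ) = Γ⁻¹ ∑ γᵢ ψ(xᵢ)` implicitly, the
elasticities of `x⋆` sum to `∑ γᵢ h(xᵢ) / (Γ h(x⋆/Γ))`, so they sum to one everywhere iff `h`
commutes with the quasi-arithmetic `ψ`-mean. On vectors with two distinct entries this says that
`h` respects the means `S p q = ψ⁻¹(α ψ p + (1 - α) ψ q)` with `0 < α < 1`, which lie strictly
between `p` and `q`; a gap argument on the zero set of `h` minus its `ψ`-affine interpolant then
gives `h = A ψ + B`. This is the Euler equation `t ψ'(t) = A ψ(t) + B`, whose solutions are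
`ψ'(t) = ψ'(1) t ^ (A - 1)`. Conversely `ψ' = c t ^ κ` gives `t ψ'(t) = (κ + 1) ψ(t) + const`,
and an affine function of `ψ` commutes with the `ψ`-mean.
-/

open Set Filter
open scoped Topology

theorem IsClosed.Icc_subset_of_forall_exists_mem_Ioo {α : Type*}
    [ConditionallyCompleteLinearOrder α] [TopologicalSpace α] [OrderTopology α]
    {Z : Set α} {a b : α} (hZ : IsClosed Z) (ha : a ∈ Z) (hb : b ∈ Z)
    (hbetween : ∀ p ∈ Z, ∀ q ∈ Z, p < q → ∃ r ∈ Z, r ∈ Ioo p q) : Icc a b ⊆ Z := by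
  intro t ht
  by_contra htZ
  have hPbdd : BddAbove (Z ∩ Iic t) := ⟨t, fun _ hx => hx.2⟩
  have hQbdd : BddBelow (Z ∩ Ici t) := ⟨t, fun _ hx => hx.2⟩
  have hP : sSup (Z ∩ Iic t) ∈ Z ∩ Iic t :=
    (hZ.inter isClosed_Iic).csSup_mem ⟨a, ha, ht.1⟩ hPbdd
  have hQ : sInf (Z ∩ Ici t) ∈ Z ∩ Ici t :=
    (hZ.inter isClosed_Ici).csInf_mem ⟨b, hb, ht.2⟩ hQbdd
  have hpt : sSup (Z ∩ Iic t) < t := hP.2.lt_of_ne fun h => htZ (h ▸ hP.1)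
  have htq : t < sInf (Z ∩ Ici t) := hQ.2.lt_of_ne' fun h => htZ (h ▸ hQ.1)
  obtain ⟨r, hrZ, hpr, hrq⟩ := hbetween _ hP.1 _ hQ.1 (hpt.trans htq)
  rcases le_total r t with hrt | htr
  · exact (le_csSup hPbdd ⟨hrZ, hrt⟩).not_gt hpr
  · exact (csInf_le hQbdd ⟨hrZ, htr⟩).not_gt hrq

section QuasiArithmeticMean

variable {s : Set ℝ} {S : ℝ → ℝ → ℝ} {α : ℝ} {ψ K : ℝ → ℝ}

theorem mem_Ioo_of_eq_weighted_mean (hψ : StrictMonoOn ψ s) (hα0 : 0 < α) (hα1 : α < 1)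
    {p q r : ℝ} (hp : p ∈ s) (hq : q ∈ s) (hr : r ∈ s) (hpq : p < q)
    (hψr : ψ r = α * ψ p + (1 - α) * ψ q) : r ∈ Ioo p q := by
  have hψpq : ψ p < ψ q := hψ hp hq hpq
  refine ⟨(hψ.lt_iff_lt hp hr).mp ?_, (hψ.lt_iff_lt hr hq).mp ?_⟩ <;> rw [hψr] <;> nlinarith

theorem eq_zero_on_Icc_of_map_mean (hs : s.OrdConnected) (hψ : StrictMonoOn ψ s)
    (hα0 : 0 < α) (hα1 : α < 1) (hSs : ∀ p ∈ s, ∀ q ∈ s, S p q ∈ s)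
    (hψS : ∀ p ∈ s, ∀ q ∈ s, ψ (S p q) = α * ψ p + (1 - α) * ψ q)
    (hKS : ∀ p ∈ s, ∀ q ∈ s, K (S p q) = α * K p + (1 - α) * K q)
    (hK : ContinuousOn K s) {p q : ℝ} (hp : p ∈ s) (hq : q ∈ s) (hKp : K p = 0)
    (hKq : K q = 0) : ∀ t ∈ Icc p q, K t = 0 := by
  intro t ht
  have hpq : p ≤ q := ht.1.trans ht.2
  have hsub : Icc p q ⊆ s := hs.out hp hq
  have hclosed : IsClosed (Icc p q ∩ K ⁻¹' {0}) :=
    (hK.mono hsub).preimage_isClosed_of_isClosed isClosed_Icc isClosed_singleton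
  refine (hclosed.Icc_subset_of_forall_exists_mem_Ioo ⟨left_mem_Icc.2 hpq, hKp⟩
    ⟨right_mem_Icc.2 hpq, hKq⟩ ?_ ht).2
  rintro a ⟨ha, hKa⟩ b ⟨hb, hKb⟩ hab
  have hr := mem_Ioo_of_eq_weighted_mean hψ hα0 hα1 (hsub ha) (hsub hb)
    (hSs _ (hsub ha) _ (hsub hb)) hab (hψS _ (hsub ha) _ (hsub hb))
  refine ⟨S a b, ⟨⟨ha.1.trans hr.1.le, hr.2.le.trans hb.2⟩, ?_⟩, hr⟩
  simp only [mem_preimage, mem_singleton_iff] at hKa hKb ⊢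
  rw [hKS _ (hsub ha) _ (hsub hb), hKa, hKb]
  ring

theorem chord_eq_of_map_mean (hs : s.OrdConnected) (hψ : StrictMonoOn ψ s)
    (hψc : ContinuousOn ψ s) (hα0 : 0 < α) (hα1 : α < 1) (hSs : ∀ p ∈ s, ∀ q ∈ s, S p q ∈ s)
    (hψS : ∀ p ∈ s, ∀ q ∈ s, ψ (S p q) = α * ψ p + (1 - α) * ψ q)
    (hKS : ∀ p ∈ s, ∀ q ∈ s, K (S p q) = α * K p + (1 - α) * K q)
    (hK : ContinuousOn K s) {p q : ℝ} (hp : p ∈ s) (hq : q ∈ s) :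
    ∀ t ∈ Icc p q, (ψ q - ψ p) * K t = (K q - K p) * ψ t + (K p * ψ q - K q * ψ p) := by
  set L : ℝ → ℝ := fun t => (ψ q - ψ p) * K t - (K q - K p) * ψ t - (K p * ψ q - K q * ψ p)
  have hLS : ∀ a ∈ s, ∀ b ∈ s, L (S a b) = α * L a + (1 - α) * L b := by
    intro a ha b hb
    simp only [L, hψS a ha b hb, hKS a ha b hb]
    ring
  have hL : ContinuousOn L s :=
    ((continuousOn_const.mul hK).sub (continuousOn_const.mul hψc)).sub continuousOn_const
  intro t ht
  have := eq_zero_on_Icc_of_map_mean hs hψ hα0 hα1 hSs hψS hLS hL hp hq (by simp only [L]; ring)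
    (by simp only [L]; ring) t ht
  simp only [L] at this
  linarith

theorem exists_eq_affine_of_map_mean (hs : s.OrdConnected) (hψ : StrictMonoOn ψ s)
    (hψc : ContinuousOn ψ s) (hα0 : 0 < α) (hα1 : α < 1) (hSs : ∀ p ∈ s, ∀ q ∈ s, S p q ∈ s)
    (hψS : ∀ p ∈ s, ∀ q ∈ s, ψ (S p q) = α * ψ p + (1 - α) * ψ q)
    (hKS : ∀ p ∈ s, ∀ q ∈ s, K (S p q) = α * K p + (1 - α) * K q)
    (hK : ContinuousOn K s) {u v : ℝ} (hu : u ∈ s) (hv : v ∈ s) (huv : u < v) :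
    ∃ A B : ℝ, ∀ t ∈ s, K t = A * ψ t + B := by
  refine ⟨(K v - K u) / (ψ v - ψ u), K u - (K v - K u) / (ψ v - ψ u) * ψ u, fun t ht => ?_⟩
  -- `u`, `v` and `t` all lie in `[min u t, max v t]`, on which `K` is affine in `ψ`.
  have hp : min u t ∈ s := by rcases min_choice u t with h | h <;> rw [h] <;> assumption
  have hq : max v t ∈ s := by rcases max_choice v t with h | h <;> rw [h] <;> assumption
  have hchord := chord_eq_of_map_mean hs hψ hψc hα0 hα1 hSs hψS hKS hK hp hq
  have hpq : min u t < max v t := (min_le_left u t).trans_lt (huv.trans_le (le_max_left v t))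
  have hu' := hchord u ⟨min_le_left u t, huv.le.trans (le_max_left v t)⟩
  have hv' := hchord v ⟨(min_le_left u t).trans huv.le, le_max_left v t⟩
  have ht' := hchord t ⟨min_le_right u t, le_max_right v t⟩
  have hD : ψ (max v t) - ψ (min u t) ≠ 0 := (sub_pos.2 (hψ hp hq hpq)).ne'
  have hψuv : ψ v - ψ u ≠ 0 := (sub_pos.2 (hψ hu hv huv)).ne'
  field_simp
  apply mul_left_cancel₀ hD
  linear_combination (ψ v - ψ u) * ht' - (ψ t - ψ u) * hv' + (ψ t - ψ v) * hu'

end QuasiArithmeticMean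

section EulerEquation

theorem eq_of_hasDerivAt_zero_Ioi {F : ℝ → ℝ} (hF : ∀ t ∈ Ioi (0 : ℝ), HasDerivAt F 0 t)
    {x y : ℝ} (hx : 0 < x) (hy : 0 < y) : F x = F y :=
  isOpen_Ioi.is_const_of_deriv_eq_zero isPreconnected_Ioi
    (fun t ht => (hF t ht).differentiableAt.differentiableWithinAt) (fun t ht => (hF t ht).deriv)
    hx hy

theorem eq_mul_rpow_of_mul_deriv_eq {G G' : ℝ → ℝ} {a : ℝ}
    (hG : ∀ t ∈ Ioi (0 : ℝ), HasDerivAt G (G' t) t)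
    (hEuler : ∀ t ∈ Ioi (0 : ℝ), t * G' t = a * G t) {t : ℝ} (ht : 0 < t) :
    G t = G 1 * t ^ a := by
  have hderiv : ∀ t ∈ Ioi (0 : ℝ), HasDerivAt (fun u => G u * u ^ (-a)) 0 t := by
    intro t ht
    refine ((hG t ht).fun_mul (Real.hasDerivAt_rpow_const (Or.inl (ne_of_gt ht)))).congr_deriv ?_
    have ht' : t ≠ 0 := ne_of_gt ht
    rw [Real.rpow_sub_one ht']
    field_simp
    linear_combination t ^ (-a) * hEuler t ht
  have h := eq_of_hasDerivAt_zero_Ioi hderiv ht one_pos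
  simp only [Real.one_rpow, mul_one, Real.rpow_neg ht.le] at h
  rw [← h, inv_mul_cancel_right₀ (Real.rpow_pos_of_pos ht a).ne']

variable {ψ ψ' : ℝ → ℝ}

theorem strictMonoOn_Ioi_of_hasDerivAt_pos (hψ : ∀ t ∈ Ioi (0 : ℝ), HasDerivAt ψ (ψ' t) t)
    (hψ' : ∀ t ∈ Ioi (0 : ℝ), 0 < ψ' t) : StrictMonoOn ψ (Ioi 0) :=
  strictMonoOn_of_hasDerivWithinAt_pos (convex_Ioi 0)
    (fun t ht => (hψ t ht).continuousAt.continuousWithinAt)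
    (fun t ht => by rw [interior_Ioi] at ht ⊢; exact (hψ t ht).hasDerivWithinAt)
    (fun t ht => hψ' t (interior_subset ht))

theorem eq_mul_rpow_of_mul_deriv_eq_affine (hψ : ∀ t ∈ Ioi (0 : ℝ), HasDerivAt ψ (ψ' t) t)
    {A B : ℝ} (h : ∀ t ∈ Ioi (0 : ℝ), t * ψ' t = A * ψ t + B) {t : ℝ} (ht : 0 < t) :
    ψ' t = ψ' 1 * t ^ (A - 1) := by
  have hG := eq_mul_rpow_of_mul_deriv_eq (G := fun u => A * ψ u + B) (G' := fun u => A * ψ' u)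
    (fun u hu => ((hψ u hu).const_mul A).add_const B)
    (fun u hu => by rw [mul_left_comm, h u hu]) ht
  rw [← h t ht, ← h 1 (mem_Ioi.2 one_pos), one_mul] at hG
  rw [Real.rpow_sub_one ht.ne', ← mul_div_assoc, ← hG]
  field_simp

theorem exists_mul_deriv_eq_affine_of_eq_mul_rpow
    (hψ : ∀ t ∈ Ioi (0 : ℝ), HasDerivAt ψ (ψ' t) t) {c κ : ℝ}
    (h : ∀ t ∈ Ioi (0 : ℝ), ψ' t = c * t ^ κ) :
    ∃ B, ∀ t ∈ Ioi (0 : ℝ), t * ψ' t = (κ + 1) * ψ t + B := by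
  have hderiv : ∀ t ∈ Ioi (0 : ℝ), HasDerivAt (fun u => c * u ^ (κ + 1) - (κ + 1) * ψ u) 0 t := by
    intro t ht
    refine (((Real.hasDerivAt_rpow_const (Or.inl (ne_of_gt ht))).const_mul c).fun_sub
      ((hψ t ht).const_mul (κ + 1))).congr_deriv ?_
    rw [h t ht, add_sub_cancel_right]
    ring
  refine ⟨c * 1 ^ (κ + 1) - (κ + 1) * ψ 1, fun t ht => ?_⟩
  rw [← eq_of_hasDerivAt_zero_Ioi hderiv ht one_pos, h t ht, Real.rpow_add_one ht.ne']
  ring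

end EulerEquation

theorem hasFDerivAt_of_eventually_comp_eq {E : Type*} [NormedAddCommGroup E] [NormedSpace ℝ E]
    {F A : E → ℝ} {A' : E →L[ℝ] ℝ} {ψ : ℝ → ℝ} {ψ' : ℝ} {s : Set ℝ} {x : E}
    (hψ : HasStrictDerivAt ψ ψ' (F x)) (hψ' : ψ' ≠ 0) (hs : s ∈ 𝓝 (F x)) (hinj : s.InjOn ψ)
    (hA : HasFDerivAt A A' x) (hF : ∀ᶠ y in 𝓝 x, F y ∈ s ∧ ψ (F y) = A y) :
    HasFDerivAt F (ψ'⁻¹ • A') x := by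
  set g := hψ.localInverse ψ ψ' (F x) hψ'
  have hAx : A x = ψ (F x) := hF.self_of_nhds.2.symm
  have hAtendsto : Tendsto A (𝓝 x) (𝓝 (ψ (F x))) := hAx ▸ hA.continuousAt.tendsto
  have hg : HasDerivAt g ψ'⁻¹ (A x) := hAx ▸ (hψ.to_localInverse hψ').hasDerivAt
  have hgF : g (ψ (F x)) = F x := (hψ.eventually_left_inverse hψ').self_of_nhds
  have hgA : Tendsto (g ∘ A) (𝓝 x) (𝓝 (F x)) := by
    have := hg.continuousAt.tendsto.comp hA.continuousAt.tendsto
    rwa [hAx, hgF] at this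
  have hloc : g ∘ A =ᶠ[𝓝 x] F := by
    filter_upwards [hF, hgA.eventually hs,
      hAtendsto.eventually (hψ.eventually_right_inverse hψ')] with y hFy hgy hψgy
    exact hinj hgy hFy.1 (hψgy.trans hFy.2.symm)
  exact (hg.comp_hasFDerivAt x hA).congr_of_eventuallyEq hloc.symm

theorem sum_mul_apply_single {ι : Type*} [Fintype ι] [DecidableEq ι] (L : (ι → ℝ) →L[ℝ] ℝ)
    (x : ι → ℝ) : ∑ i, x i * L (Pi.single i 1) = L x := by
  conv_rhs => rw [← Finset.univ_sum_single x, map_sum]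
  refine Finset.sum_congr rfl fun i _ => ?_
  rw [← smul_eq_mul, ← map_smul, ← Pi.single_smul, smul_eq_mul, mul_one]

theorem sum_mul_apply_update_const {ι : Type*} [Fintype ι] [DecidableEq ι] (w : ι → ℝ)
    (F : ℝ → ℝ) (i₀ : ι) (p q : ℝ) :
    ∑ i, w i * F (Function.update (fun _ => q) i₀ p i) = w i₀ * F p + (∑ i, w i - w i₀) * F q := by
  rw [← Finset.add_sum_erase _ _ (Finset.mem_univ i₀),
    ← Finset.add_sum_erase _ w (Finset.mem_univ i₀), Function.update_self, add_sub_cancel_left,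
    Finset.sum_mul]
  congr 1
  refine Finset.sum_congr rfl fun i hi => ?_
  rw [Function.update_of_ne (Finset.ne_of_mem_erase hi)]

/-- `ψ` plays the role of `φ'`: the defining formula `x⋆ = Γ (φ')⁻¹(Γ⁻¹ ∑ γᵢ φ'(xᵢ))`, with
`(φ')⁻¹` unfolded. -/
def IsLowDistortionAggregator {ι : Type*} [Fintype ι] (ψ : ℝ → ℝ) (γ : ι → ℝ) (Γ : ℝ)
    (f : (ι → ℝ) → ℝ) : Prop :=
  ∀ x : ι → ℝ, (∀ i, 0 < x i) → 0 < f x / Γ ∧ ψ (f x / Γ) = (1 / Γ) * ∑ i, γ i * ψ (x i)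

namespace IsLowDistortionAggregator

variable {ι : Type*} [Fintype ι] {ψ ψ' : ℝ → ℝ} {γ : ι → ℝ} {Γ : ℝ} {f : (ι → ℝ) → ℝ}

theorem fderiv_apply_self (hf : IsLowDistortionAggregator ψ γ Γ f) (hΓ : 0 < Γ)
    (hψ : ∀ t ∈ Ioi (0 : ℝ), HasDerivAt ψ (ψ' t) t) (hψ'c : ContinuousOn ψ' (Ioi 0))
    (hψ' : ∀ t ∈ Ioi (0 : ℝ), 0 < ψ' t) {x : ι → ℝ} (hx : ∀ i, 0 < x i) :
    fderiv ℝ f x x = (∑ i, γ i * (x i * ψ' (x i))) / ψ' (f x / Γ) := by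
  have hs : 0 < f x / Γ := (hf x hx).1
  have hstrict : HasStrictDerivAt ψ (ψ' (f x / Γ)) (f x / Γ) :=
    hasStrictDerivAt_of_hasDerivAt_of_continuousAt
      (eventually_of_mem (Ioi_mem_nhds hs) hψ)
      (hψ'c.continuousAt (Ioi_mem_nhds hs))
  have hA : HasFDerivAt (fun y : ι → ℝ => 1 / Γ * ∑ i, γ i * ψ (y i))
      ((1 / Γ) • ∑ i, γ i • ψ' (x i) • ContinuousLinearMap.proj (R := ℝ) i) x :=
    (HasFDerivAt.fun_sum (u := Finset.univ) fun i _ =>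
      ((hψ _ (hx i)).comp_hasFDerivAt (f := fun y : ι → ℝ => y i) x
        (ContinuousLinearMap.proj (R := ℝ) (φ := fun _ : ι => ℝ) i).hasFDerivAt).const_mul
        (γ i)).const_mul (1 / Γ)
  have hnear : ∀ᶠ y in 𝓝 x, ∀ i, 0 < y i :=
    eventually_all.2 fun i => (continuous_apply i).continuousAt.eventually (Ioi_mem_nhds (hx i))
  have hF := hasFDerivAt_of_eventually_comp_eq (F := fun y => f y / Γ) hstrict (hψ' _ hs).ne'
    (Ioi_mem_nhds hs) (strictMonoOn_Ioi_of_hasDerivAt_pos hψ hψ').injOn hA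
    (hnear.mono fun y hy => hf y hy)
  have hfΓ : (fun y => Γ * (f y / Γ)) = f := funext fun y => mul_div_cancel₀ _ hΓ.ne'
  rw [(hfΓ ▸ hF.const_mul Γ : HasFDerivAt f _ x).fderiv]
  simp only [smul_apply, FunLike.coe_sum, Finset.sum_apply,
    ContinuousLinearMap.proj_apply, smul_eq_mul, mul_comm (ψ' _) (x _)]
  field_simp

theorem sum_elasticity_eq_one_iff [DecidableEq ι] (hf : IsLowDistortionAggregator ψ γ Γ f)
    (hΓ : 0 < Γ) (hψ : ∀ t ∈ Ioi (0 : ℝ), HasDerivAt ψ (ψ' t) t) (hψ'c : ContinuousOn ψ' (Ioi 0))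
    (hψ' : ∀ t ∈ Ioi (0 : ℝ), 0 < ψ' t) {x : ι → ℝ} (hx : ∀ i, 0 < x i) :
    ∑ i, (x i / f x) * fderiv ℝ f x (Pi.single i 1) = 1 ↔
      ∑ i, γ i * (x i * ψ' (x i)) = Γ * (f x / Γ * ψ' (f x / Γ)) := by
  have hs : 0 < f x / Γ := (hf x hx).1
  have hfx : 0 < f x := by simpa [hΓ] using mul_pos hΓ hs
  have hsum : ∑ i, (x i / f x) * fderiv ℝ f x (Pi.single i 1) = fderiv ℝ f x x / f x := by
    rw [← sum_mul_apply_single, Finset.sum_div]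
    simp_rw [div_mul_eq_mul_div]
  rw [hsum, hf.fderiv_apply_self hΓ hψ hψ'c hψ' hx, div_div,
    div_eq_one_iff_eq (mul_pos (hψ' _ hs) hfx).ne', ← mul_assoc, mul_div_cancel₀ _ hΓ.ne',
    mul_comm (ψ' _)]

theorem sum_mul_comp_eq_of_eq_affine (hf : IsLowDistortionAggregator ψ γ Γ f)
    (hΓ : Γ = ∑ i, γ i) (hΓ0 : Γ ≠ 0) {h : ℝ → ℝ} {A B : ℝ}
    (hh : ∀ t ∈ Ioi (0 : ℝ), h t = A * ψ t + B) {x : ι → ℝ} (hx : ∀ i, 0 < x i) :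
    ∑ i, γ i * h (x i) = Γ * h (f x / Γ) :=
  calc ∑ i, γ i * h (x i) = A * ∑ i, γ i * ψ (x i) + (∑ i, γ i) * B := by
        rw [Finset.mul_sum, Finset.sum_mul, ← Finset.sum_add_distrib]
        exact Finset.sum_congr rfl fun i _ => by rw [hh _ (hx i)]; ring
    _ = Γ * h (f x / Γ) := by
        rw [hh _ (hf x hx).1, (hf x hx).2, ← hΓ]
        field_simp

theorem exists_eq_affine_of_sum_mul_comp_eq [Nontrivial ι] (hf : IsLowDistortionAggregator ψ γ Γ f)
    (hγ : ∀ i, 0 < γ i) (hΓ : Γ = ∑ i, γ i) (hψ : StrictMonoOn ψ (Ioi 0))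
    (hψc : ContinuousOn ψ (Ioi 0)) {h : ℝ → ℝ} (hh : ContinuousOn h (Ioi 0))
    (hmean : ∀ x : ι → ℝ, (∀ i, 0 < x i) → ∑ i, γ i * h (x i) = Γ * h (f x / Γ)) :
    ∃ A B : ℝ, ∀ t ∈ Ioi (0 : ℝ), h t = A * ψ t + B := by
  classical
  obtain ⟨i₀, i₁, hi⟩ := exists_pair_ne ι
  have hΓpos : 0 < Γ := hΓ ▸ Finset.sum_pos (fun i _ => hγ i) Finset.univ_nonempty
  have hγΓ : γ i₀ < Γ := hΓ ▸ Finset.single_lt_sum hi.symm (Finset.mem_univ _)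
    (Finset.mem_univ _) (hγ i₁) fun i _ _ => (hγ i).le
  set X : ℝ → ℝ → ι → ℝ := fun p q => Function.update (fun _ => q) i₀ p
  have hX : ∀ p ∈ Ioi (0 : ℝ), ∀ q ∈ Ioi (0 : ℝ), ∀ i, 0 < X p q i := fun p hp q hq i => by
    by_cases hi₀ : i = i₀
    · subst hi₀; simpa [X] using hp
    · simpa [X, Function.update_of_ne hi₀] using hq
  have hsum : ∀ (F : ℝ → ℝ) (p q : ℝ), ∑ i, γ i * F (X p q i) = γ i₀ * F p + (Γ - γ i₀) * F q :=
    fun F p q => hΓ ▸ sum_mul_apply_update_const γ F i₀ p q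
  refine exists_eq_affine_of_map_mean (S := fun p q => f (X p q) / Γ) (α := γ i₀ / Γ)
    ordConnected_Ioi hψ hψc (div_pos (hγ i₀) hΓpos) ((div_lt_one hΓpos).2 hγΓ)
    (fun p hp q hq => (hf _ (hX p hp q hq)).1) (fun p hp q hq => ?_) (fun p hp q hq => ?_) hh
    (mem_Ioi.2 one_pos) (mem_Ioi.2 two_pos) one_lt_two
  · rw [(hf _ (hX p hp q hq)).2, hsum]
    field_simp
  · have := hmean _ (hX p hp q hq)
    rw [hsum] at this
    field_simp
    linear_combination -this

end IsLowDistortionAggregator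

theorem statement_13_general (m : ℕ) (hm : 2 ≤ m) (Dφ DDφ : ℝ → ℝ)
    (hd2 : ∀ t ∈ Set.Ioi (0:ℝ), HasDerivAt Dφ (DDφ t) t)
    (hc2 : ContinuousOn DDφ (Set.Ioi 0))
    (hpos : ∀ t ∈ Set.Ioi (0:ℝ), 0 < DDφ t)
    (γ : Fin m → ℝ) (hγ : ∀ i, 0 < γ i)
    (Γ : ℝ) (hΓ : Γ = ∑ i, γ i)
    (f : (Fin m → ℝ) → ℝ)
    (hf : ∀ x : Fin m → ℝ, (∀ i, 0 < x i) →
      0 < f x / Γ ∧ Dφ (f x / Γ) = (1 / Γ) * ∑ i, γ i * Dφ (x i)) :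
    (∀ x : Fin m → ℝ, (∀ i, 0 < x i) →
        (∑ i, (x i / f x) * fderiv ℝ f x (Pi.single i 1)) = 1)
      ↔ ∃ c > (0:ℝ), ∃ κ : ℝ, ∀ t ∈ Set.Ioi (0:ℝ), DDφ t = c * t ^ κ := by
  have : Nontrivial (Fin m) := Fin.nontrivial_iff_two_le.2 hm
  have hΓpos : 0 < Γ := hΓ ▸ Finset.sum_pos (fun i _ => hγ i) Finset.univ_nonempty
  have hLDA : IsLowDistortionAggregator Dφ γ Γ f := hf
  calc (∀ x : Fin m → ℝ, (∀ i, 0 < x i) → ∑ i, (x i / f x) * fderiv ℝ f x (Pi.single i 1) = 1)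
      ↔ ∀ x : Fin m → ℝ, (∀ i, 0 < x i) →
          ∑ i, γ i * (x i * DDφ (x i)) = Γ * (f x / Γ * DDφ (f x / Γ)) :=
        forall₂_congr fun x hx => hLDA.sum_elasticity_eq_one_iff hΓpos hd2 hc2 hpos hx
    _ ↔ ∃ A B : ℝ, ∀ t ∈ Ioi (0 : ℝ), t * DDφ t = A * Dφ t + B :=
        ⟨hLDA.exists_eq_affine_of_sum_mul_comp_eq hγ hΓ
          (strictMonoOn_Ioi_of_hasDerivAt_pos hd2 hpos)
          (fun t ht => (hd2 t ht).continuousAt.continuousWithinAt) (continuousOn_id.mul hc2),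
        fun ⟨_, _, hAB⟩ _ hx => hLDA.sum_mul_comp_eq_of_eq_affine hΓ hΓpos.ne' hAB hx⟩
    _ ↔ ∃ c > (0 : ℝ), ∃ κ : ℝ, ∀ t ∈ Ioi (0 : ℝ), DDφ t = c * t ^ κ :=
        ⟨fun ⟨A, _, hAB⟩ => ⟨DDφ 1, hpos 1 (mem_Ioi.2 one_pos), A - 1,
          fun _ ht => eq_mul_rpow_of_mul_deriv_eq_affine hd2 hAB ht⟩,
        fun ⟨_, _, κ, hκ⟩ => ⟨κ + 1, exists_mul_deriv_eq_affine_of_eq_mul_rpow hd2 hκ⟩⟩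

/-- Theorem 6 of the paper: the elasticities of the LDA `x⋆` with generator
`φ` sum to one on `(0,∞)^m` if and only if `φ''(t) = c·t^κ` for some `c > 0` and `κ ∈ ℝ`
(CES when `κ ≠ −1`, the Cobb–Douglas limit when `κ = −1`). -/
theorem statement_13 (m : ℕ) (hm : 2 ≤ m) (φ Dφ DDφ : ℝ → ℝ)
    (hconv : StrictConvexOn ℝ (Set.Ioi 0) φ)
    (hd1 : ∀ t ∈ Set.Ioi (0:ℝ), HasDerivAt φ (Dφ t) t)
    (hd2 : ∀ t ∈ Set.Ioi (0:ℝ), HasDerivAt Dφ (DDφ t) t)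
    (hc2 : ContinuousOn DDφ (Set.Ioi 0))
    (hpos : ∀ t ∈ Set.Ioi (0:ℝ), 0 < DDφ t)
    (γ : Fin m → ℝ) (hγ : ∀ i, 0 < γ i)
    (Γ : ℝ) (hΓ : Γ = ∑ i, γ i)
    (f : (Fin m → ℝ) → ℝ)
    (hf : ∀ x : Fin m → ℝ, (∀ i, 0 < x i) →
      0 < f x / Γ ∧ Dφ (f x / Γ) = (1 / Γ) * ∑ i, γ i * Dφ (x i))
    (hfpos : ∀ x : Fin m → ℝ, (∀ i, 0 < x i) → 0 < f x) :
    (∀ x : Fin m → ℝ, (∀ i, 0 < x i) →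
        (∑ i, (x i / f x) * fderiv ℝ f x (Pi.single i 1)) = 1)
      ↔ ∃ c > (0:ℝ), ∃ κ : ℝ, ∀ t ∈ Set.Ioi (0:ℝ), DDφ t = c * t ^ κ :=
  statement_13_general m hm Dφ DDφ hd2 hc2 hpos γ hγ Γ hΓ f hf
end

section
/- Let m ≥ 2 and let x_⋆ be the LDA on (0,∞)^m with generator φ and weights γ_1,…,γ_m > 0. Then the following are equivalent: (a) there exist indices i ≠ j and a constant κ > 0 such that the marginal rate of substitution satisfies S_{ij}(x) = κ·(x_j/x_i) for all x ∈ (0,∞)^m (i.e. the substitution elasticity of x_i for x_j is identically one); (b) there exists b > 0 such that φ''(t) = b/t for all t > 0 (so that φ is, up to an affine term, the Cobb–Douglas generator b·(t·log t − t), and x_⋆ is a Cobb–Douglas aggregator). -/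
/-!
Differentiating the defining identity `φ'(x⋆/Γ) = Γ⁻¹ ∑ γᵢ φ'(xᵢ)` in `xₖ` gives
`φ''(x⋆/Γ) ∂ₖx⋆ = γₖ φ''(xₖ)`, so `Sᵢⱼ(x) = γᵢ φ''(xᵢ) / (γⱼ φ''(xⱼ))`. Evaluating at `xᵢ = t` and
all other coordinates `1`, proportionality to `xⱼ/xᵢ` forces `φ''(t) = b/t`. Conversely, if
`φ'' = b/t` then `φ' = b log + const`, so `x⋆ = Γ ∏ xᵢ^(γᵢ/Γ)` is differentiable and
`Sᵢⱼ = (γᵢ/γⱼ) xⱼ/xᵢ`.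
-/

open Set Real Filter Topology

lemma isOpen_setOf_forall_pos {ι : Type*} [Finite ι] : IsOpen {x : ι → ℝ | ∀ k, 0 < x k} := by
  simpa only [ofPred_forall] using
    isOpen_iInter_of_finite fun k => isOpen_lt continuous_const (continuous_apply k)

lemma eq_mul_log_add_of_hasDerivAt {g : ℝ → ℝ} {b : ℝ}
    (hg : ∀ t ∈ Ioi (0:ℝ), HasDerivAt g (b / t) t) :
    ∀ t ∈ Ioi (0:ℝ), g t = b * log t + g 1 := by
  have hlog : ∀ t ∈ Ioi (0:ℝ), HasDerivAt (fun s => b * log s + g 1) (b / t) t := fun t ht => by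
    simpa [div_eq_mul_inv] using ((hasDerivAt_log (ne_of_gt ht)).const_mul b).add_const (g 1)
  exact isOpen_Ioi.eqOn_of_deriv_eq isPreconnected_Ioi
    (fun t ht => (hg t ht).differentiableAt.differentiableWithinAt)
    (fun t ht => (hlog t ht).differentiableAt.differentiableWithinAt)
    (fun t ht => (hg t ht).deriv.trans (hlog t ht).deriv.symm) (mem_Ioi.2 one_pos) (by simp)

namespace LDA

variable {ι : Type*} [Fintype ι] {Dφ DDφ : ℝ → ℝ} {γ : ι → ℝ} {Γ : ℝ} {f : (ι → ℝ) → ℝ}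

/-- `f = x⋆` for a generator `φ` with `φ' = Dφ`. -/
def IsAggregator (Dφ : ℝ → ℝ) (γ : ι → ℝ) (Γ : ℝ) (f : (ι → ℝ) → ℝ) : Prop :=
  ∀ x : ι → ℝ, (∀ i, 0 < x i) → 0 < f x / Γ ∧ Dφ (f x / Γ) = (1 / Γ) * ∑ i, γ i * Dφ (x i)

theorem mul_fderiv_single_eq [DecidableEq ι] (hd2 : ∀ t ∈ Ioi (0:ℝ), HasDerivAt Dφ (DDφ t) t)
    (hf : IsAggregator Dφ γ Γ f) (hΓ : Γ ≠ 0) {x : ι → ℝ} (hx : ∀ k, 0 < x k)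
    (hdiff : DifferentiableAt ℝ f x) (k : ι) :
    DDφ (f x / Γ) * fderiv ℝ f x (Pi.single k 1) = γ k * DDφ (x k) := by
  have hL : HasFDerivAt (fun y => Dφ (f y / Γ)) (DDφ (f x / Γ) • Γ⁻¹ • fderiv ℝ f x) x := by
    have := (hd2 _ (hf x hx).1).comp_hasFDerivAt_of_eq x (hdiff.hasFDerivAt.mul_const Γ⁻¹)
      (div_eq_mul_inv _ _)
    simpa only [Function.comp_def, ← div_eq_mul_inv] using this
  have hR : HasFDerivAt (fun y : ι → ℝ => (1 / Γ) * ∑ i, γ i * Dφ (y i))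
      ((1 / Γ) • ∑ i, (γ i * DDφ (x i)) •
        ContinuousLinearMap.proj (R := ℝ) (φ := fun _ : ι => ℝ) i) x := by
    refine (HasFDerivAt.fun_sum fun i _ => ?_).const_mul _
    simpa [mul_smul] using
      ((hd2 _ (hx i)).comp_hasFDerivAt x (hasFDerivAt_apply i x)).const_mul (γ i)
  have hLR : (fun y => Dφ (f y / Γ)) =ᶠ[𝓝 x] fun y => (1 / Γ) * ∑ i, γ i * Dφ (y i) := by
    filter_upwards [isOpen_setOf_forall_pos.mem_nhds hx] with y hy using (hf y hy).2
  have := congr($((hL.congr_of_eventuallyEq hLR.symm).unique hR) (Pi.single k 1))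
  simp only [smul_apply, smul_eq_mul, one_div, sum_apply, ContinuousLinearMap.proj_apply,
    Pi.single_apply, mul_ite, mul_one, mul_zero, Finset.sum_ite_eq', Finset.mem_univ, ↓reduceIte]
    at this
  rw [mul_left_comm] at this
  exact mul_left_cancel₀ (inv_ne_zero hΓ) this

theorem fderiv_single_div_fderiv_single [DecidableEq ι]
    (hd2 : ∀ t ∈ Ioi (0:ℝ), HasDerivAt Dφ (DDφ t) t) (hf : IsAggregator Dφ γ Γ f) (hΓ : Γ ≠ 0)
    {x : ι → ℝ} (hx : ∀ k, 0 < x k) (hdiff : DifferentiableAt ℝ f x)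
    (hDD : DDφ (f x / Γ) ≠ 0) (i j : ι) :
    fderiv ℝ f x (Pi.single i 1) / fderiv ℝ f x (Pi.single j 1)
      = γ i * DDφ (x i) / (γ j * DDφ (x j)) := by
  have hpartial (k : ι) : fderiv ℝ f x (Pi.single k 1) = γ k * DDφ (x k) / DDφ (f x / Γ) := by
    rw [← mul_fderiv_single_eq hd2 hf hΓ hx hdiff, mul_div_cancel_left₀ _ hDD]
  rw [hpartial, hpartial, div_div_div_cancel_right₀ hDD]

theorem exists_eq_div_of_fderiv_ratio [DecidableEq ι]
    (hd2 : ∀ t ∈ Ioi (0:ℝ), HasDerivAt Dφ (DDφ t) t) (hpos : ∀ t ∈ Ioi (0:ℝ), 0 < DDφ t)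
    (hγ : ∀ i, 0 < γ i) (hf : IsAggregator Dφ γ Γ f) (hΓ : Γ ≠ 0) {i j : ι} (hij : i ≠ j)
    {κ : ℝ} (hκ : 0 < κ)
    (hS : ∀ x : ι → ℝ, (∀ k, 0 < x k) →
      fderiv ℝ f x (Pi.single i 1) / fderiv ℝ f x (Pi.single j 1) = κ * (x j / x i)) :
    ∃ b > (0:ℝ), ∀ t ∈ Ioi (0:ℝ), DDφ t = b / t := by
  have hDD1 := hpos 1 (mem_Ioi.2 one_pos)
  refine ⟨κ * γ j * DDφ 1 / γ i, by have := hγ i; have := hγ j; positivity, fun t ht => ?_⟩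
  set x := Function.update (fun _ : ι => (1:ℝ)) i t
  have hx (k : ι) : 0 < x k := by
    rcases eq_or_ne k i with rfl | hk
    · simpa [x] using ht
    · simp [x, hk]
  have hxi : x i = t := by simp [x]
  have hxj : x j = 1 := by simp [x, hij.symm]
  have hSx := hS x hx
  -- a non-differentiable `f` would have zero `fderiv`, contradicting `Sᵢⱼ(x) ≠ 0`
  have hdiff : DifferentiableAt ℝ f x := by
    by_contra hnd
    have : κ * (x j / x i) ≠ 0 := by have := hx i; have := hx j; positivity
    simp [← hSx, fderiv_zero_of_not_differentiableAt hnd] at this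
  rw [fderiv_single_div_fderiv_single hd2 hf hΓ hx hdiff (hpos _ (hf x hx).1).ne', hxi, hxj]
    at hSx
  have := hγ i; have := hγ j; have := mem_Ioi.1 ht
  field_simp at hSx ⊢
  linarith

theorem eventuallyEq_cobbDouglas {b : ℝ} (hd2 : ∀ t ∈ Ioi (0:ℝ), HasDerivAt Dφ (b / t) t)
    (hb : b ≠ 0) (hf : IsAggregator Dφ γ Γ f) (hΓ : Γ = ∑ i, γ i) (hΓ0 : Γ ≠ 0)
    {x : ι → ℝ} (hx : ∀ k, 0 < x k) :
    f =ᶠ[𝓝 x] fun y => Γ * exp ((1 / Γ) * ∑ k, γ k * log (y k)) := by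
  have hDφ := eq_mul_log_add_of_hasDerivAt hd2
  filter_upwards [isOpen_setOf_forall_pos.mem_nhds hx] with y hy
  obtain ⟨hpos, heq⟩ := hf y hy
  rw [hDφ _ hpos, Finset.sum_congr rfl fun k _ => by rw [hDφ _ (hy k)]] at heq
  have hlog : log (f y / Γ) = (1 / Γ) * ∑ k, γ k * log (y k) := by
    simp only [mul_add, Finset.sum_add_distrib, ← Finset.sum_mul, ← hΓ, mul_left_comm _ b,
      ← Finset.mul_sum] at heq
    field_simp at heq ⊢
    apply mul_left_cancel₀ hb
    linear_combination heq
  rw [← hlog, exp_log hpos]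
  field_simp

theorem fderiv_ratio_of_hasDerivAt_div [DecidableEq ι] {b : ℝ}
    (hd2 : ∀ t ∈ Ioi (0:ℝ), HasDerivAt Dφ (b / t) t) (hb : b ≠ 0) (hf : IsAggregator Dφ γ Γ f)
    (hΓ : Γ = ∑ i, γ i) (hΓ0 : Γ ≠ 0) (hγ : ∀ i, γ i ≠ 0) {x : ι → ℝ} (hx : ∀ k, 0 < x k)
    (i j : ι) :
    fderiv ℝ f x (Pi.single i 1) / fderiv ℝ f x (Pi.single j 1) = γ i / γ j * (x j / x i) := by
  have hdiff : DifferentiableAt ℝ f x :=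
    DifferentiableAt.congr_of_eventuallyEq (by fun_prop (disch := exact (hx _).ne'))
      (eventuallyEq_cobbDouglas hd2 hb hf hΓ hΓ0 hx)
  rw [fderiv_single_div_fderiv_single hd2 hf hΓ0 hx hdiff (div_ne_zero hb (hf x hx).1.ne')]
  have := (hx i).ne'; have := (hx j).ne'; have := hγ j
  field_simp

end LDA

theorem statement_15_general (m : ℕ) (hm : 2 ≤ m) (Dφ DDφ : ℝ → ℝ)
    (hd2 : ∀ t ∈ Set.Ioi (0:ℝ), HasDerivAt Dφ (DDφ t) t)
    (hpos : ∀ t ∈ Set.Ioi (0:ℝ), 0 < DDφ t)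
    (γ : Fin m → ℝ) (hγ : ∀ i, 0 < γ i)
    (Γ : ℝ) (hΓ : Γ = ∑ i, γ i)
    (f : (Fin m → ℝ) → ℝ)
    (hf : ∀ x : Fin m → ℝ, (∀ i, 0 < x i) →
      0 < f x / Γ ∧ Dφ (f x / Γ) = (1 / Γ) * ∑ i, γ i * Dφ (x i)) :
    (∃ i j : Fin m, i ≠ j ∧ ∃ κ > (0:ℝ), ∀ x : Fin m → ℝ, (∀ k, 0 < x k) →
        fderiv ℝ f x (Pi.single i 1) / fderiv ℝ f x (Pi.single j 1)
          = κ * (x j / x i))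
      ↔ ∃ b > (0:ℝ), ∀ t ∈ Set.Ioi (0:ℝ), DDφ t = b / t := by
  have hΓ0 : Γ ≠ 0 := by
    have : Nonempty (Fin m) := ⟨⟨0, by omega⟩⟩
    exact hΓ ▸ (Finset.sum_pos (fun i _ => hγ i) Finset.univ_nonempty).ne'
  constructor
  · rintro ⟨i, j, hij, κ, hκ, hS⟩
    exact LDA.exists_eq_div_of_fderiv_ratio hd2 hpos hγ hf hΓ0 hij hκ hS
  · rintro ⟨b, hb, hDD⟩
    have hd2' : ∀ t ∈ Set.Ioi (0:ℝ), HasDerivAt Dφ (b / t) t := fun t ht => hDD t ht ▸ hd2 t ht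
    refine ⟨⟨0, by omega⟩, ⟨1, by omega⟩, by simp [Fin.ext_iff], γ ⟨0, by omega⟩ / γ ⟨1, by omega⟩,
      div_pos (hγ _) (hγ _), fun x hx => ?_⟩
    exact LDA.fderiv_ratio_of_hasDerivAt_div hd2' hb.ne' hf hΓ hΓ0 (fun i => (hγ i).ne') hx _ _

/-- Theorem 7 of the paper: for an LDA `x⋆` with generator `φ`, the marginal
rate of substitution `S_ij` is proportional (with positive constant) to `xⱼ/xᵢ` for some pair
of distinct indices — i.e. the substitution elasticity of `xᵢ` for `xⱼ` is identically one —
if and only if `φ''(t) = b/t` for some `b > 0` (Cobb–Douglas generator). -/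
theorem statement_15 (m : ℕ) (hm : 2 ≤ m) (φ Dφ DDφ : ℝ → ℝ)
    (hconv : StrictConvexOn ℝ (Set.Ioi 0) φ)
    (hd1 : ∀ t ∈ Set.Ioi (0:ℝ), HasDerivAt φ (Dφ t) t)
    (hd2 : ∀ t ∈ Set.Ioi (0:ℝ), HasDerivAt Dφ (DDφ t) t)
    (hc2 : ContinuousOn DDφ (Set.Ioi 0))
    (hpos : ∀ t ∈ Set.Ioi (0:ℝ), 0 < DDφ t)
    (γ : Fin m → ℝ) (hγ : ∀ i, 0 < γ i)
    (Γ : ℝ) (hΓ : Γ = ∑ i, γ i)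
    (f : (Fin m → ℝ) → ℝ)
    (hf : ∀ x : Fin m → ℝ, (∀ i, 0 < x i) →
      0 < f x / Γ ∧ Dφ (f x / Γ) = (1 / Γ) * ∑ i, γ i * Dφ (x i)) :
    (∃ i j : Fin m, i ≠ j ∧ ∃ κ > (0:ℝ), ∀ x : Fin m → ℝ, (∀ k, 0 < x k) →
        fderiv ℝ f x (Pi.single i 1) / fderiv ℝ f x (Pi.single j 1)
          = κ * (x j / x i))
      ↔ ∃ b > (0:ℝ), ∀ t ∈ Set.Ioi (0:ℝ), DDφ t = b / t :=
  statement_15_general m hm Dφ DDφ hd2 hpos γ hγ Γ hΓ f hf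
end
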